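/- Let $K$ be a number field, $F \in \mathcal{O}_K[x,y]$ a binary cubic with $v_{\mathfrak{q}}(\Delta_F)=1$ for a prime $\mathfrak{q} \nmid 2\alpha_0$ (where $\alpha_0$ is the leading coefficient), and suppose $F \equiv \alpha_0(x-ay)^2(x-by) \pmod{\mathfrak{q}}$ with $a \not\equiv b \pmod{\mathfrak{q}}$. Suppose $x_0, y_0, z_0 \in \mathcal{O}_K$ satisfy $F(x_0,y_0) = z_0^l$ for a prime $l$ with $\mathfrak{q} \nmid z_0$. Then $\mathfrak{q} \nmid H(x_0,y_0)$ and the $j$-invariant of the Frey curve satisfies $v_{\mathfrak{q}}(j(x_0,y_0)) = -1$; in particular the Frey curve has potentially multiplicative reduction at $\mathfrak{q}$. -/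

import Mathlib

/-!
Reducing modulo `𝔮` (where `2` is invertible), the factorisation `F ≡ α₀(x-ay)²(x-by)` pins down
`α₁, α₂, α₃` modulo `𝔮`, and substituting them into the Hessian gives
`H ≡ -α₀²(a-b)²(x-ay)²`. As `𝔮 ∤ z₀`, also `𝔮 ∤ F(x₀,y₀) = α₀(x₀-ay₀)²(x₀-by₀)`, so `x₀ ≢ ay₀`
and hence `𝔮 ∤ H(x₀,y₀)`. Therefore `v_𝔮(j) = 3 v_𝔮(H) - v_𝔮(Δ) - 2 v_𝔮(F) = -1`.
-/

open MvPolynomial NumberField IsDedekindDomain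

section BinaryCubic

variable {R : Type*} [CommRing R]

noncomputable def binaryCubic (α₀ α₁ α₂ α₃ : R) : MvPolynomial (Fin 2) R :=
  C α₀ * X 0 ^ 3 + C α₁ * X 0 ^ 2 * X 1 + C α₂ * X 0 * X 1 ^ 2 + C α₃ * X 1 ^ 3

noncomputable def hessianDet (F : MvPolynomial (Fin 2) R) : MvPolynomial (Fin 2) R :=
  pderiv 0 (pderiv 0 F) * pderiv 1 (pderiv 1 F) - pderiv 1 (pderiv 0 F) ^ 2

def binaryCubicHessian (α₀ α₁ α₂ α₃ x y : R) : R :=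
  (3 * α₀ * α₂ - α₁ ^ 2) * x ^ 2 + (9 * α₀ * α₃ - α₁ * α₂) * x * y +
    (3 * α₁ * α₃ - α₂ ^ 2) * y ^ 2

theorem map_binaryCubicHessian {S : Type*} [CommRing S] (f : R →+* S) (α₀ α₁ α₂ α₃ x y : R) :
    f (binaryCubicHessian α₀ α₁ α₂ α₃ x y) =
      binaryCubicHessian (f α₀) (f α₁) (f α₂) (f α₃) (f x) (f y) := by
  simp only [binaryCubicHessian, map_add, map_sub, map_mul, map_pow, map_ofNat]

theorem eval_binaryCubic (α₀ α₁ α₂ α₃ x y : R) :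
    eval ![x, y] (binaryCubic α₀ α₁ α₂ α₃) =
      α₀ * x ^ 3 + α₁ * x ^ 2 * y + α₂ * x * y ^ 2 + α₃ * y ^ 3 := by
  simp [binaryCubic]

theorem eval_hessianDet_binaryCubic (α₀ α₁ α₂ α₃ x y : R) :
    eval ![x, y] (hessianDet (binaryCubic α₀ α₁ α₂ α₃)) =
      4 * binaryCubicHessian α₀ α₁ α₂ α₃ x y := by
  have hC (n : ℕ) [n.AtLeastTwo] (i : Fin 2) :
      pderiv i (OfNat.ofNat n : MvPolynomial (Fin 2) R) = 0 := by
    rw [← map_ofNat C n, pderiv_C]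
  simp [hessianDet, binaryCubic, binaryCubicHessian, Derivation.leibniz_pow, hC]
  ring

theorem binaryCubic_mk_eq_of_sub_mem {I : Ideal R} {α₀ α₁ α₂ α₃ a b : R}
    (h : ∀ x y, eval ![x, y] (binaryCubic α₀ α₁ α₂ α₃) - α₀ * (x - a * y) ^ 2 * (x - b * y) ∈ I)
    (x y : R ⧸ I) :
    Ideal.Quotient.mk I α₀ * x ^ 3 + Ideal.Quotient.mk I α₁ * x ^ 2 * y +
        Ideal.Quotient.mk I α₂ * x * y ^ 2 + Ideal.Quotient.mk I α₃ * y ^ 3 =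
      Ideal.Quotient.mk I α₀ * (x - Ideal.Quotient.mk I a * y) ^ 2 *
        (x - Ideal.Quotient.mk I b * y) := by
  obtain ⟨x, rfl⟩ := Ideal.Quotient.mk_surjective x
  obtain ⟨y, rfl⟩ := Ideal.Quotient.mk_surjective y
  have := Ideal.Quotient.eq_zero_iff_mem.mpr (h x y)
  rw [eval_binaryCubic] at this
  simpa [sub_eq_zero] using this

variable [NoZeroDivisors R]

theorem eval_eq_binaryCubicHessian_of_C_four_mul_eq_hessianDet (h2 : (2 : R) ≠ 0)
    {α₀ α₁ α₂ α₃ : R} {H : MvPolynomial (Fin 2) R}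
    (hH : C 4 * H = hessianDet (binaryCubic α₀ α₁ α₂ α₃)) (x y : R) :
    eval ![x, y] H = binaryCubicHessian α₀ α₁ α₂ α₃ x y := by
  have h4 : (4 : R) ≠ 0 := by
    rw [show (4 : R) = 2 * 2 by norm_num]; exact mul_ne_zero h2 h2
  apply mul_left_cancel₀ h4
  simpa [eval_hessianDet_binaryCubic] using congrArg (eval ![x, y]) hH

theorem coeffs_of_binaryCubic_eq_sq_mul (h2 : (2 : R) ≠ 0) {α₀ α₁ α₂ α₃ a b : R}
    (h : ∀ x y, α₀ * x ^ 3 + α₁ * x ^ 2 * y + α₂ * x * y ^ 2 + α₃ * y ^ 3 =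
      α₀ * (x - a * y) ^ 2 * (x - b * y)) :
    α₁ = -(α₀ * (2 * a + b)) ∧ α₂ = α₀ * (a ^ 2 + 2 * a * b) ∧ α₃ = -(α₀ * a ^ 2 * b) := by
  have h01 := h 0 1
  have h11 := h 1 1
  have hm11 := h (-1) 1
  have e3 : α₃ = -(α₀ * a ^ 2 * b) := by linear_combination h01
  refine ⟨?_, ?_, e3⟩
  · refine (mul_right_inj' h2).mp ?_
    linear_combination h11 + hm11 - 2 * h01
  · refine (mul_right_inj' h2).mp ?_
    linear_combination h11 - hm11 - 2 * h01 + 2 * e3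

theorem binaryCubicHessian_eq_of_binaryCubic_eq_sq_mul (h2 : (2 : R) ≠ 0)
    {α₀ α₁ α₂ α₃ a b : R}
    (h : ∀ x y, α₀ * x ^ 3 + α₁ * x ^ 2 * y + α₂ * x * y ^ 2 + α₃ * y ^ 3 =
      α₀ * (x - a * y) ^ 2 * (x - b * y)) (x y : R) :
    binaryCubicHessian α₀ α₁ α₂ α₃ x y = -(α₀ ^ 2 * (a - b) ^ 2 * (x - a * y) ^ 2) := by
  obtain ⟨rfl, rfl, rfl⟩ := coeffs_of_binaryCubic_eq_sq_mul h2 h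
  unfold binaryCubicHessian
  ring

end BinaryCubic

theorem IsDedekindDomain.HeightOneSpectrum.valuation_algebraMap_div {R : Type*} [CommRing R]
    [IsDedekindDomain R] {K : Type*} [Field K] [Algebra R K] [IsFractionRing R K]
    (v : HeightOneSpectrum R) (r s : R) :
    v.valuation K (algebraMap R K r / algebraMap R K s) = v.intValuation r / v.intValuation s := by
  rw [map_div₀, v.valuation_of_algebraMap, v.valuation_of_algebraMap]

theorem frey_curve_pot_mult_reduction_general (K : Type*) [Field K] [NumberField K]
    (α₀ α₁ α₂ α₃ : 𝓞 K)
    (F : MvPolynomial (Fin 2) (𝓞 K))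
    (hF : F = C α₀ * X 0 ^ 3 + C α₁ * X 0 ^ 2 * X 1 + C α₂ * X 0 * X 1 ^ 2 + C α₃ * X 1 ^ 3)
    (Δ : 𝓞 K)
    (H : MvPolynomial (Fin 2) (𝓞 K))
    (hH : C 4 * H = pderiv 0 (pderiv 0 F) * pderiv 1 (pderiv 1 F) - pderiv 1 (pderiv 0 F) ^ 2)
    (𝔮 : HeightOneSpectrum (𝓞 K))
    -- `v_𝔮(Δ_F) = 1`
    (hΔ𝔮 : 𝔮.intValuation Δ = Multiplicative.ofAdd (-1 : ℤ))
    (h2α₀ : 2 * α₀ ∉ 𝔮.asIdeal)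
    (a b : 𝓞 K)
    (hcong : ∀ x y : 𝓞 K,
      MvPolynomial.eval ![x, y] F - α₀ * (x - a * y) ^ 2 * (x - b * y) ∈ 𝔮.asIdeal)
    (hab : a - b ∉ 𝔮.asIdeal)
    (l : ℕ)
    (x₀ y₀ z₀ : 𝓞 K)
    (hsol : MvPolynomial.eval ![x₀, y₀] F = z₀ ^ l)
    (hz₀ : z₀ ∉ 𝔮.asIdeal)
    (j : K)
    (hj : j = algebraMap (𝓞 K) K (-2 ^ 8 * MvPolynomial.eval ![x₀, y₀] H ^ 3) /
      algebraMap (𝓞 K) K (Δ * MvPolynomial.eval ![x₀, y₀] F ^ 2)) :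
    MvPolynomial.eval ![x₀, y₀] H ∉ 𝔮.asIdeal ∧
      𝔮.valuation K j = Multiplicative.ofAdd (1 : ℤ) ∧
      (1 : WithZero (Multiplicative ℤ)) < 𝔮.valuation K j := by
  replace hF : F = binaryCubic α₀ α₁ α₂ α₃ := hF
  subst hF
  have hresidue := binaryCubic_mk_eq_of_sub_mem hcong
  set π := Ideal.Quotient.mk 𝔮.asIdeal
  have hπ {r : 𝓞 K} : π r = 0 ↔ r ∈ 𝔮.asIdeal := Ideal.Quotient.eq_zero_iff_mem
  have h2 : (2 : 𝓞 K) ∉ 𝔮.asIdeal := fun h ↦ h2α₀ (𝔮.asIdeal.mul_mem_right _ h)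
  have hα₀ : α₀ ∉ 𝔮.asIdeal := fun h ↦ h2α₀ (𝔮.asIdeal.mul_mem_left _ h)
  have hF₀ : eval ![x₀, y₀] (binaryCubic α₀ α₁ α₂ α₃) ∉ 𝔮.asIdeal :=
    hsol ▸ fun h ↦ hz₀ (𝔮.isPrime.mem_of_pow_mem l h)
  have h2π : (2 : 𝓞 K ⧸ 𝔮.asIdeal) ≠ 0 := by simpa [← map_ofNat π 2, hπ] using h2
  have hroot : π x₀ - π a * π y₀ ≠ 0 := by
    intro h
    apply hF₀
    rw [← hπ, eval_binaryCubic]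
    simpa [h] using hresidue (π x₀) (π y₀)
  have hHres :
      π (eval ![x₀, y₀] H) = -(π α₀ ^ 2 * (π a - π b) ^ 2 * (π x₀ - π a * π y₀) ^ 2) := by
    rw [eval_eq_binaryCubicHessian_of_C_four_mul_eq_hessianDet
      (ne_of_mem_of_not_mem 𝔮.asIdeal.zero_mem h2).symm hH,
      map_binaryCubicHessian, binaryCubicHessian_eq_of_binaryCubic_eq_sq_mul h2π hresidue]
  have hHmem : eval ![x₀, y₀] H ∉ 𝔮.asIdeal := by
    rw [← hπ, hHres]
    simp [hπ, hα₀, hroot, ← map_sub, hab]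
  open HeightOneSpectrum in
  have hval : 𝔮.valuation K j = Multiplicative.ofAdd (1 : ℤ) := by
    rw [hj, 𝔮.valuation_algebraMap_div]
    simp only [map_mul, map_pow, Valuation.map_neg, hΔ𝔮, intValuation_eq_one_iff.mpr h2,
      intValuation_eq_one_iff.mpr hHmem, intValuation_eq_one_iff.mpr hF₀]
    rw [one_pow, one_pow, one_mul, one_pow, mul_one, one_div, ← WithZero.coe_inv, ofAdd_neg,
      inv_inv]
  exact ⟨hHmem, hval, hval ▸ WithZero.one_lt_coe.mpr (Multiplicative.ofAdd_lt.mpr one_pos)⟩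

/-- Let `K` be a number field and `F(x,y) = α₀x³ + α₁x²y + α₂xy² + α₃y³ ∈ 𝓞 K[x,y]` a
binary cubic with `v_𝔮(Δ_F) = 1` for a prime `𝔮 ∤ 2α₀`, and suppose
`F ≡ α₀(x-ay)²(x-by) (mod 𝔮)` with `a ≢ b (mod 𝔮)`. Suppose `x₀, y₀, z₀ ∈ 𝓞 K` satisfy
`F(x₀,y₀) = z₀^l` for a prime `l` with `𝔮 ∤ z₀`. Then `𝔮 ∤ H(x₀,y₀)` (where `H` is the
Hessian of `F`) and the `j`-invariant `j = -2⁸H(x₀,y₀)³/(Δ_F·F(x₀,y₀)²)` of the Frey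
curve satisfies `v_𝔮(j) = -1` (i.e. `𝔮`-adic valuation `ofAdd 1` multiplicatively); in
particular `v_𝔮(j) < 0`, so the Frey curve has potentially multiplicative reduction
at `𝔮`. -/
theorem frey_curve_pot_mult_reduction (K : Type*) [Field K] [NumberField K]
    (α₀ α₁ α₂ α₃ : 𝓞 K)
    (F : MvPolynomial (Fin 2) (𝓞 K))
    (hF : F = C α₀ * X 0 ^ 3 + C α₁ * X 0 ^ 2 * X 1 + C α₂ * X 0 * X 1 ^ 2 + C α₃ * X 1 ^ 3)
    (Δ : 𝓞 K)
    (hΔ : Δ = 18 * α₀ * α₁ * α₂ * α₃ + (α₁ * α₂) ^ 2 - 27 * (α₀ * α₃) ^ 2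
      - 4 * α₀ * α₂ ^ 3 - 4 * α₁ ^ 3 * α₃)
    (H : MvPolynomial (Fin 2) (𝓞 K))
    (hH : C 4 * H = pderiv 0 (pderiv 0 F) * pderiv 1 (pderiv 1 F) - pderiv 1 (pderiv 0 F) ^ 2)
    (𝔮 : HeightOneSpectrum (𝓞 K))
    -- `v_𝔮(Δ_F) = 1`
    (hΔ𝔮 : 𝔮.intValuation Δ = Multiplicative.ofAdd (-1 : ℤ))
    (h2α₀ : 2 * α₀ ∉ 𝔮.asIdeal)
    (a b : 𝓞 K)
    (hcong : ∀ x y : 𝓞 K,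
      MvPolynomial.eval ![x, y] F - α₀ * (x - a * y) ^ 2 * (x - b * y) ∈ 𝔮.asIdeal)
    (hab : a - b ∉ 𝔮.asIdeal)
    (l : ℕ) (hl : l.Prime)
    (x₀ y₀ z₀ : 𝓞 K)
    (hsol : MvPolynomial.eval ![x₀, y₀] F = z₀ ^ l)
    (hz₀ : z₀ ∉ 𝔮.asIdeal)
    (j : K)
    (hj : j = algebraMap (𝓞 K) K (-2 ^ 8 * MvPolynomial.eval ![x₀, y₀] H ^ 3) /
      algebraMap (𝓞 K) K (Δ * MvPolynomial.eval ![x₀, y₀] F ^ 2)) :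
    MvPolynomial.eval ![x₀, y₀] H ∉ 𝔮.asIdeal ∧
      𝔮.valuation K j = Multiplicative.ofAdd (1 : ℤ) ∧
      (1 : WithZero (Multiplicative ℤ)) < 𝔮.valuation K j :=
  frey_curve_pot_mult_reduction_general K α₀ α₁ α₂ α₃ F hF Δ H hH 𝔮 hΔ𝔮 h2α₀ a b hcong hab l x₀ y₀
    z₀ hsol hz₀ j hj
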